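/- Let p₁, p₂ ≥ 2 with gcd(p₁,p₂) = 1 and r₁, r₂ ≥ 2 with gcd(r₁,r₂) = 1. If there exists a surjective group homomorphism from the torus-knot group G(p₁,p₂) = ⟨u, v ∣ u^{p₁} = v^{p₂}⟩ onto G(r₁,r₂) = ⟨a, b ∣ a^{r₁} = b^{r₂}⟩, then min(r₁(r₂−1), r₂(r₁−1)) ≤ min(p₁(p₂−1), p₂(p₁−1)). (Corollary 3.3: if k is a torus knot and k ≥ k′, then the crossing number of k is no less than that of k′, since by Murasugi the crossing number of a (p,q)-torus knot is min{p(q−1), q(p−1)}.) -/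

import Mathlib

/-- The single relator `x^p * (y^q)⁻¹` of the `(p,q)`-torus knot group. -/
abbrev torusRel (p q : ℕ) : Set (FreeGroup Bool) :=
  {FreeGroup.of true ^ p * (FreeGroup.of false ^ q)⁻¹}

/-- The `(p,q)`-torus knot group `⟨x, y ∣ x^p = y^q⟩`. -/
abbrev G (p q : ℕ) : Type := PresentedGroup (torusRel p q)

/-!
Composing an epimorphism `G(p₁,p₂) → G(r₁,r₂)` with the quotient map `G(r₁,r₂) → ℤ/r₁ ∗ ℤ/r₂`
gives an epimorphism onto a free product, whose centre is trivial; so it kills the central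
element `x^p₁ = y^p₂`, and the images of `x` and `y` are torsion. A torsion element of a free
product is conjugate into a factor (conjugating by the first letter shortens a reduced word whose
first and last letters lie in the same factor, and a word whose first and last letters lie in
different factors has infinite order). Hence the orders `d₁ ∣ p₁` and `d₂ ∣ p₂` of the images of
`x` and `y` each divide `r₁` or `r₂`. Projecting onto the factor `ℤ/rₖ`, which is then generated by
elements of orders dividing `d₁` and `d₂`, gives `rₖ ∣ d₁ d₂`. As `r₁` and `r₂` are coprime, this
forces `r₁ ∣ d₁, r₂ ∣ d₂` or `r₁ ∣ d₂, r₂ ∣ d₁`, hence `{r₁, r₂} ≤ {p₁, p₂}` in some order.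
-/

namespace Monoid.CoprodI

variable {ι : Type*}

namespace Word

variable {M : ι → Type*} [∀ i, Monoid (M i)] [∀ i, DecidableEq (M i)]

theorem length_rcons_le {i : ι} (p : Pair M i) :
    (rcons p).toList.length ≤ p.tail.toList.length + 1 := by
  unfold rcons; split <;> simp

theorem length_tail_le_length_rcons {i : ι} (p : Pair M i) :
    p.tail.toList.length ≤ (rcons p).toList.length := by
  unfold rcons; split <;> simp

variable [DecidableEq ι]

theorem length_of_smul_le {i : ι} (m : M i) (w : Word M) :
    (of m • w).toList.length ≤ w.toList.length + 1 := by
  rw [of_smul_def]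
  refine (length_rcons_le _).trans (Nat.succ_le_succ ?_)
  conv_rhs => rw [← (equivPair i).symm_apply_apply w, equivPair_symm]
  exact length_tail_le_length_rcons (equivPair i w)

theorem length_equiv_prod_le (L : List (Σ i, M i)) :
    (equiv (L.map fun x => of x.2).prod).toList.length ≤ L.length := by
  induction L with
  | nil => simp [equiv]
  | cons x L ih =>
    simp only [List.map_cons, List.prod_cons, List.length_cons]
    grw [equiv, Equiv.coe_fn_mk, mul_smul, length_of_smul_le]
    exact Nat.succ_le_succ ih

end Word

variable {H : ι → Type*} [∀ i, Group (H i)]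

theorem Word.prod_injective : Function.Injective (Word.prod : Word H → CoprodI H) := by
  classical exact Word.equiv.symm.injective

namespace NeWord

theorem toList_eq_of_prod_eq {i j k l : ι} {v : NeWord H i j} {w : NeWord H k l}
    (h : v.prod = w.prod) : v.toList = w.toList :=
  congrArg Word.toList (Word.prod_injective h)

theorem prod_ne_one {i j : ι} (w : NeWord H i j) : w.prod ≠ 1 := fun h =>
  w.toList_ne_nil (congrArg Word.toList (Word.prod_injective (h.trans Word.prod_empty.symm)))

theorem exists_prod_eq {g : CoprodI H} (hg : g ≠ 1) : ∃ i j, ∃ w : NeWord H i j, w.prod = g := by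
  classical
  obtain ⟨i, j, w, hw⟩ := of_word (Word.equiv g) fun h =>
    hg (by rw [← Word.equiv.symm_apply_apply g, h]; rfl)
  exact ⟨i, j, w, by rw [NeWord.prod, hw]; exact Word.equiv.symm_apply_apply g⟩

theorem equiv_prod [DecidableEq ι] [∀ i, DecidableEq (H i)] {i j : ι} (w : NeWord H i j) :
    Word.equiv w.prod = w.toWord :=
  Word.equiv.apply_symm_apply w.toWord

theorem not_isOfFinOrder_prod {i j : ι} (w : NeWord H i j) (hij : i ≠ j) :
    ¬IsOfFinOrder w.prod := by
  have hpow : ∀ n : ℕ, ∃ v : NeWord H i j, v.prod = w.prod ^ (n + 1) := by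
    intro n
    induction n with
    | zero => exact ⟨w, (pow_one _).symm⟩
    | succ n ih =>
      obtain ⟨v, hv⟩ := ih
      exact ⟨w.append hij.symm v, by rw [append_prod, hv, ← pow_succ']⟩
  rw [isOfFinOrder_iff_pow_eq_one]
  rintro ⟨_ | n, hn, hw⟩
  · exact hn.false
  · obtain ⟨v, hv⟩ := hpow n
    exact v.prod_ne_one (hv.trans hw)

theorem toList_eq_singleton_or_cons_append {i : ι} (w : NeWord H i i) :
    w.toList = [⟨i, w.head⟩] ∨ ∃ L, w.toList = ⟨i, w.head⟩ :: (L ++ [⟨i, w.last⟩]) := by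
  obtain ⟨t, ht⟩ := List.head?_eq_some_iff.mp w.toList_head?
  rcases List.eq_nil_or_concat t with rfl | ⟨L, y, rfl⟩
  · exact Or.inl ht
  · have hy := w.toList_getLast?
    rw [ht, List.concat_eq_append, ← List.cons_append, List.getLast?_concat] at hy
    exact Or.inr ⟨L, by rw [ht, List.concat_eq_append, Option.some_inj.mp hy]⟩

end NeWord

theorem isConj_prod_cons_append {i : ι} (a b : H i) (L : List (Σ i, H i)) :
    IsConj ((((⟨i, a⟩ : Σ i, H i) :: (L ++ [⟨i, b⟩])).map fun x => of x.2).prod)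
      (((L ++ [(⟨i, b * a⟩ : Σ i, H i)]).map fun x => of x.2).prod) :=
  isConj_iff.mpr ⟨(of a)⁻¹, by simp [mul_assoc]⟩

theorem exists_isConj_of_of_isOfFinOrder [Nonempty ι] {g : CoprodI H} (hg : IsOfFinOrder g) :
    ∃ i, ∃ a : H i, IsConj g (of a) := by
  classical
  induction hn : (Word.equiv g).toList.length using Nat.strong_induction_on generalizing g with
  | _ n ih =>
  obtain rfl | hg1 := eq_or_ne g 1
  · exact ⟨Classical.arbitrary ι, 1, by rw [map_one]⟩
  obtain ⟨i, j, w, rfl⟩ := NeWord.exists_prod_eq hg1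
  rw [NeWord.equiv_prod] at hn
  obtain rfl | hij := eq_or_ne i j
  swap
  · exact absurd hg (w.not_isOfFinOrder_prod hij)
  rcases w.toList_eq_singleton_or_cons_append with hs | ⟨L, hL⟩
  · refine ⟨i, w.head, ?_⟩
    change IsConj (w.toList.map fun x => of x.2).prod _
    rw [hs, List.map_singleton, List.prod_singleton]
  · have hc := isConj_prod_cons_append w.head w.last L
    rw [← hL] at hc
    refine (ih _ ?_ (hc.isOfFinOrder hg) rfl).imp fun k ⟨a, hk⟩ => ⟨a, hc.trans hk⟩
    grw [Word.length_equiv_prod_le, ← hn]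
    change _ < w.toList.length
    simp [hL]

theorem center_eq_bot [Nontrivial ι] [∀ i, Nontrivial (H i)] :
    Subgroup.center (CoprodI H) = ⊥ := by
  classical
  refine (Subgroup.eq_bot_iff_forall _).mpr fun z hz => ?_
  by_contra hz1
  obtain ⟨i, j, w, rfl⟩ := NeWord.exists_prod_eq hz1
  obtain ⟨k, hkj⟩ := exists_ne j
  obtain ⟨c, hc⟩ := exists_ne (1 : H k)
  have hright : (w.append hkj.symm (NeWord.singleton c hc)).prod = of c * w.prod := by
    rw [NeWord.append_prod, NeWord.prod_singleton]
    exact Subgroup.mem_center_iff.mp hz (of c) |>.symm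
  obtain rfl | hki := eq_or_ne k i
  · -- `c` merges into the first letter of `w`: `of c * w.prod` is shorter than `w.prod * of c`
    obtain ⟨t, ht⟩ := List.head?_eq_some_iff.mp w.toList_head?
    have hleft :
        of c * w.prod = (((⟨k, c * w.head⟩ : Σ i, H i) :: t).map fun x => of x.2).prod := by
      change _ * (w.toList.map fun x => of x.2).prod = _
      simp [ht, mul_assoc]
    have hlen := Word.length_equiv_prod_le ((⟨k, c * w.head⟩ : Σ i, H i) :: t)
    rw [← hleft, ← hright, NeWord.equiv_prod] at hlen
    change (w.toList ++ _).length ≤ _ at hlen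
    simp [ht] at hlen
  · have hleft : ((NeWord.singleton c hc).append hki w).prod = of c * w.prod := by
      rw [NeWord.append_prod, NeWord.prod_singleton]
    have hlist := congrArg List.head? (NeWord.toList_eq_of_prod_eq (hright.trans hleft.symm))
    rw [NeWord.toList_head?, NeWord.toList_head?] at hlist
    exact hki (congrArg Sigma.fst (Option.some.inj hlist)).symm

theorem exists_orderOf_dvd_natCard [Nonempty ι] {g : CoprodI H} (hg : IsOfFinOrder g) :
    ∃ i, orderOf g ∣ Nat.card (H i) := by
  obtain ⟨i, a, c, hc⟩ := exists_isConj_of_of_isOfFinOrder hg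
  rw [hc.orderOf_eq, orderOf_injective of (of_injective i) a]
  exact ⟨i, orderOf_dvd_natCard a⟩

end Monoid.CoprodI

theorem Nat.Coprime.dvd_and_dvd_or_of_dvd_mul {r₁ r₂ d₁ d₂ : ℕ} (hr : r₁.Coprime r₂)
    (hr₁ : r₁ ≠ 1) (hr₂ : r₂ ≠ 1) (hd₁ : d₁ ∣ r₁ ∨ d₁ ∣ r₂) (hd₂ : d₂ ∣ r₁ ∨ d₂ ∣ r₂)
    (h₁ : r₁ ∣ d₁ * d₂) (h₂ : r₂ ∣ d₁ * d₂) : (r₁ ∣ d₁ ∧ r₂ ∣ d₂) ∨ (r₁ ∣ d₂ ∧ r₂ ∣ d₁) := by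
  rcases hd₁ with h₁₁ | h₁₂ <;> rcases hd₂ with h₂₁ | h₂₂
  · exact absurd ((hr.symm.mul_right hr.symm).eq_one_of_dvd (h₂.trans (mul_dvd_mul h₁₁ h₂₁))) hr₂
  · exact Or.inl ⟨(hr.coprime_dvd_right h₂₂).dvd_of_dvd_mul_right h₁,
      (hr.symm.coprime_dvd_right h₁₁).dvd_of_dvd_mul_left h₂⟩
  · exact Or.inr ⟨(hr.coprime_dvd_right h₁₂).dvd_of_dvd_mul_left h₁,
      (hr.symm.coprime_dvd_right h₂₁).dvd_of_dvd_mul_right h₂⟩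
  · exact absurd ((hr.mul_right hr).eq_one_of_dvd (h₁.trans (mul_dvd_mul h₁₂ h₂₂))) hr₁

theorem PresentedGroup.map_pow_eq_one {α A : Type*} [CommGroup A] {rels : Set (FreeGroup α)}
    (f : PresentedGroup rels →* A) {n : ℕ} (h : ∀ a, f (of a) ^ n = 1) (g : PresentedGroup rels) :
    f g ^ n = 1 :=
  DFunLike.congr_fun (PresentedGroup.ext (φ := (powMonoidHom n).comp f) (ψ := 1) h) g

theorem MonoidHom.map_mem_center_of_surjective {K L : Type*} [Group K] [Group L] (f : K →* L)
    (hf : Function.Surjective f) {z : K} (hz : z ∈ Subgroup.center K) :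
    f z ∈ Subgroup.center L := by
  refine Subgroup.mem_center_iff.mpr fun l => ?_
  obtain ⟨k, rfl⟩ := hf l
  rw [← map_mul, ← map_mul, Subgroup.mem_center_iff.mp hz k]

namespace G

open Monoid PresentedGroup

theorem of_pow_eq_of_pow (p q : ℕ) : (of true : G p q) ^ p = of false ^ q := by
  have h := mk_eq_mk_of_mul_inv_mem (rels := torusRel p q)
    (x := FreeGroup.of true ^ p) (y := FreeGroup.of false ^ q) rfl
  rwa [map_pow, map_pow] at h

theorem of_pow_mem_center (p q : ℕ) : (of true : G p q) ^ p ∈ Subgroup.center (G p q) := by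
  refine Subgroup.mem_center_iff.mpr fun g => Subgroup.mem_centralizer_singleton_iff.mp <|
    generated_by _ _ (fun b => Subgroup.mem_centralizer_singleton_iff.mpr ?_) g
  cases b
  · rw [of_pow_eq_of_pow]
    exact (Commute.self_pow _ _).eq
  · exact (Commute.self_pow _ _).eq

abbrev cyclicPair (p q : ℕ) : Bool → Type := fun b => Multiplicative (ZMod (cond b p q))

theorem card_cyclicPair (p q : ℕ) (b : Bool) : Nat.card (cyclicPair p q b) = cond b p q := by
  rw [Nat.card_congr Multiplicative.toAdd, Nat.card_zmod]

def toCoprodI (p q : ℕ) : G p q →* CoprodI (cyclicPair p q) :=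
  toGroup (f := fun b => CoprodI.of (M := cyclicPair p q) (i := b) (.ofAdd 1)) <| by
    rintro r rfl
    simp [← map_pow CoprodI.of, ← ofAdd_nsmul]

theorem toCoprodI_of (p q : ℕ) (b : Bool) :
    toCoprodI p q (of b) = CoprodI.of (M := cyclicPair p q) (i := b) (.ofAdd 1) :=
  toGroup.of _

theorem toCoprodI_surjective (p q : ℕ) : Function.Surjective (toCoprodI p q) := by
  intro x
  induction x using CoprodI.induction_on with
  | one => exact ⟨1, map_one _⟩
  | of b m =>
    refine ⟨of b ^ (m.toAdd.cast : ℤ), ?_⟩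
    rw [map_zpow, toCoprodI_of, ← map_zpow, ← ofAdd_zsmul, zsmul_one, ZMod.intCast_zmod_cast]
    rfl
  | mul x y hx hy =>
    obtain ⟨g, rfl⟩ := hx
    obtain ⟨h, rfl⟩ := hy
    exact ⟨g * h, map_mul _ _ _⟩

theorem orderOf_dvd_or_dvd {r₁ r₂ n : ℕ} {g : CoprodI (cyclicPair r₁ r₂)} (hn : n ≠ 0)
    (hg : g ^ n = 1) : orderOf g ∣ r₁ ∨ orderOf g ∣ r₂ := by
  obtain ⟨b, hb⟩ :=
    CoprodI.exists_orderOf_dvd_natCard (isOfFinOrder_iff_pow_eq_one.mpr ⟨n, by omega, hg⟩)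
  rw [card_cyclicPair] at hb
  cases b
  exacts [Or.inr hb, Or.inl hb]

theorem dvd_orderOf_mul_orderOf {p q r₁ r₂ : ℕ} {ψ : G p q →* CoprodI (cyclicPair r₁ r₂)}
    (hψ : Function.Surjective ψ) (b : Bool) :
    cond b r₁ r₂ ∣ orderOf (ψ (of true)) * orderOf (ψ (of false)) := by
  classical
  let π : CoprodI (cyclicPair r₁ r₂) →* cyclicPair r₁ r₂ b :=
    CoprodI.lift (Pi.mulSingle b (MonoidHom.id _))
  obtain ⟨g, hg⟩ := (CoprodI.of_leftInverse b).surjective.comp hψ (Multiplicative.ofAdd 1)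
  have hpow : π (ψ g) ^ (orderOf (ψ (of true)) * orderOf (ψ (of false))) = 1 := by
    refine PresentedGroup.map_pow_eq_one (π.comp ψ) (fun a => ?_) g
    cases a
    · rw [MonoidHom.comp_apply, pow_mul', ← map_pow, pow_orderOf_eq_one, map_one, one_pow]
    · rw [MonoidHom.comp_apply, pow_mul, ← map_pow, pow_orderOf_eq_one, map_one, one_pow]
  rw [← ZMod.addOrderOf_one (cond b r₁ r₂), ← orderOf_ofAdd_eq_addOrderOf, ← hg]
  exact orderOf_dvd_of_pow_eq_one hpow

theorem dvd_and_dvd_or_of_surjective {p₁ p₂ r₁ r₂ : ℕ} (hp₁ : p₁ ≠ 0) (hp₂ : p₂ ≠ 0)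
    (hr₁ : r₁ ≠ 1) (hr₂ : r₂ ≠ 1) (hr : r₁.Coprime r₂) {φ : G p₁ p₂ →* G r₁ r₂}
    (hφ : Function.Surjective φ) : (r₁ ∣ p₁ ∧ r₂ ∣ p₂) ∨ (r₁ ∣ p₂ ∧ r₂ ∣ p₁) := by
  have (b : Bool) : Nontrivial (cyclicPair r₁ r₂ b) := by
    have := ZMod.nontrivial_iff.mpr (show cond b r₁ r₂ ≠ 1 by cases b <;> assumption)
    infer_instance
  let ψ := (toCoprodI r₁ r₂).comp φ
  have hψ : Function.Surjective ψ := (toCoprodI_surjective r₁ r₂).comp hφ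
  have hx : ψ (of true) ^ p₁ = 1 := by
    rw [← map_pow, ← Subgroup.mem_bot, ← CoprodI.center_eq_bot]
    exact ψ.map_mem_center_of_surjective hψ (of_pow_mem_center p₁ p₂)
  have hy : ψ (of false) ^ p₂ = 1 := by rw [← map_pow, ← of_pow_eq_of_pow, map_pow, hx]
  have hx' := orderOf_dvd_of_pow_eq_one hx
  have hy' := orderOf_dvd_of_pow_eq_one hy
  exact (hr.dvd_and_dvd_or_of_dvd_mul hr₁ hr₂ (orderOf_dvd_or_dvd hp₁ hx)
    (orderOf_dvd_or_dvd hp₂ hy) (dvd_orderOf_mul_orderOf hψ true) (dvd_orderOf_mul_orderOf hψ false)).imp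
    (And.imp (·.trans hx') (·.trans hy')) (And.imp (·.trans hy') (·.trans hx'))

end G

theorem crossing_number_le_of_torus_knot_epimorphism_general
    (p₁ p₂ r₁ r₂ : ℕ) (hp₁ : 2 ≤ p₁) (hp₂ : 2 ≤ p₂) (hr₁ : 2 ≤ r₁) (hr₂ : 2 ≤ r₂)
    (hr : Nat.gcd r₁ r₂ = 1)
    (h : ∃ φ : G p₁ p₂ →* G r₁ r₂, Function.Surjective φ) :
    min (r₁ * (r₂ - 1)) (r₂ * (r₁ - 1)) ≤ min (p₁ * (p₂ - 1)) (p₂ * (p₁ - 1)) := by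
  obtain ⟨φ, hφ⟩ := h
  rcases G.dvd_and_dvd_or_of_surjective (by omega) (by omega) (by omega) (by omega) hr hφ with
    ⟨h₁, h₂⟩ | ⟨h₁, h₂⟩
  · have hle₁ := Nat.le_of_dvd (by omega) h₁
    have hle₂ := Nat.le_of_dvd (by omega) h₂
    exact min_le_min (Nat.mul_le_mul hle₁ (by omega)) (Nat.mul_le_mul hle₂ (by omega))
  · have hle₁ := Nat.le_of_dvd (by omega) h₁
    have hle₂ := Nat.le_of_dvd (by omega) h₂
    rw [min_comm]
    exact min_le_min (Nat.mul_le_mul hle₂ (by omega)) (Nat.mul_le_mul hle₁ (by omega))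

/-- Corollary 3.3: if there is an epimorphism of torus-knot groups
`G(p₁,p₂) → G(r₁,r₂)`, then the crossing number `min {r₁(r₂−1), r₂(r₁−1)}` of the target
torus knot is at most the crossing number `min {p₁(p₂−1), p₂(p₁−1)}` of the source. -/
theorem crossing_number_le_of_torus_knot_epimorphism
    (p₁ p₂ r₁ r₂ : ℕ) (hp₁ : 2 ≤ p₁) (hp₂ : 2 ≤ p₂) (hr₁ : 2 ≤ r₁) (hr₂ : 2 ≤ r₂)
    (hp : Nat.gcd p₁ p₂ = 1) (hr : Nat.gcd r₁ r₂ = 1)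
    (h : ∃ φ : G p₁ p₂ →* G r₁ r₂, Function.Surjective φ) :
    min (r₁ * (r₂ - 1)) (r₂ * (r₁ - 1)) ≤ min (p₁ * (p₂ - 1)) (p₂ * (p₁ - 1)) :=
  crossing_number_le_of_torus_knot_epimorphism_general p₁ p₂ r₁ r₂ hp₁ hp₂ hr₁ hr₂ hr h
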